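/- For every k ≥ 1, as z → 1 within the slit plane, N_k(z) = (k+1)(z+β²) + p_k(z)√(1−z) where lim_{z→1} p_k(z) = −√2(1+β²)k(k+1)/(2π); in particular lim_{z→1} (N_k(z) − (k+1)(z+β²))/√(1−z) = −√2(1+β²)k(k+1)/(2π). -/

import Mathlib

open Real Complex Filter

/-- The slit plane `ℂ \ [1,∞) \ (−∞,−1]`. -/
def Dslit : Set ℂ := {z : ℂ | ¬(z.im = 0 ∧ (1 ≤ z.re ∨ z.re ≤ -1))}

/-- Analytic extension of the degree-0 arc-cosine kernel to the slit plane. -/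
noncomputable def K0C (z : ℂ) : ℂ :=
  ((Real.pi : ℂ) + Complex.I * Complex.log (z + Complex.I * ((1 - z ^ 2) ^ ((1 : ℂ) / 2))))
    / (Real.pi : ℂ)

/-- Analytic extension of the degree-1 arc-cosine kernel to the slit plane. -/
noncomputable def K1C (z : ℂ) : ℂ :=
  (z * ((Real.pi : ℂ) + Complex.I * Complex.log (z + Complex.I * ((1 - z ^ 2) ^ ((1 : ℂ) / 2))))
    + (1 - z ^ 2) ^ ((1 : ℂ) / 2)) / (Real.pi : ℂ)

/-- The NTK `N_k` on the slit plane, defined by the simplified recursion. -/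
noncomputable def NkC (β : ℝ) : ℕ → ℂ → ℂ
  | 0 => fun z => z + (β : ℂ) ^ 2
  | (k + 1) => fun z => K1C^[k + 1] z + NkC β k z * K0C (K1C^[k] z) + (β : ℂ) ^ 2

open Set Topology Asymptotics

/-!
Put `w = √(1 - z)`, so that `z + i√(1 - z²) = 1 + w (i√(1 + z) - w)`. The cubic Taylor expansion
of `log (1 + x)` then gives `arccos z = √2 w + (√2/12) w³ + o(w³)`, hence
`κ₀ z = 1 - (√2/π) w + o(w)`, `κ₁ z = z + o(w)` and `1 - κ₁ z = w² (1 - (2√2/(3π)) w + o(w))`.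
Because the coefficient of `w` in the last factor is real and negative,
`√(1 - κ₁ z) = w √((1 - κ₁ z)/(1 - z))` holds on the principal branch even when `w` is almost
imaginary, so `√(1 - κ₁^{(j)} z) ~ w` for every iterate. In the recursion the coefficient of `w`
in `N_k z - (k+1)(z + β²)` therefore changes by `-(√2/π)(k+1)(1+β²)` from `k` to `k+1`,
which sums to `-√2(1+β²)k(k+1)/(2π)`.
-/

noncomputable def csqrt (a : ℂ) : ℂ := a ^ ((1 : ℂ) / 2)

noncomputable def arccosC (z : ℂ) : ℂ := -I * log (z + I * csqrt (1 - z ^ 2))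

lemma csqrt_eq_cpow_inv_two (a : ℂ) : csqrt a = a ^ (2⁻¹ : ℂ) := by
  rw [csqrt, one_div]

lemma csqrt_mul_self (a : ℂ) : csqrt a * csqrt a = a := by
  rw [← sq, csqrt_eq_cpow_inv_two, cpow_ofNat_inv_pow]

lemma re_csqrt_nonneg (a : ℂ) : 0 ≤ (csqrt a).re := by
  rw [csqrt_eq_cpow_inv_two, cpow_inv_two_re]
  exact Real.sqrt_nonneg _

lemma csqrt_eq_of_mul_self_eq {a c : ℂ} (h : c * c = a) (hc : 0 < c.re) : csqrt a = c := by
  have hfac : (csqrt a - c) * (csqrt a + c) = 0 := by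
    linear_combination csqrt_mul_self a - h
  rcases mul_eq_zero.1 hfac with h1 | h1
  · exact sub_eq_zero.1 h1
  · have := re_csqrt_nonneg a
    rw [eq_neg_of_add_eq_zero_left h1, neg_re] at this
    linarith

lemma csqrt_ne_zero {a : ℂ} (ha : a ≠ 0) : csqrt a ≠ 0 := by
  simp [csqrt, cpow_eq_zero_iff, ha]

lemma csqrt_mul {x y : ℂ} (hx : x ≠ 0) (hy : y ≠ 0) (h : x.arg + y.arg ∈ Ioc (-π) π) :
    csqrt (x * y) = csqrt x * csqrt y := by
  rw [csqrt, csqrt, csqrt, cpow_def_of_ne_zero (mul_ne_zero hx hy), cpow_def_of_ne_zero hx,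
    cpow_def_of_ne_zero hy, log_mul hx hy h, add_mul, Complex.exp_add]

lemma arg_one_sub_add_arg_one_add_mem (z : ℂ) : (1 - z).arg + (1 + z).arg ∈ Ioc (-π) π := by
  have := neg_pi_lt_arg (1 - z); have := neg_pi_lt_arg (1 + z)
  have := arg_le_pi (1 - z); have := arg_le_pi (1 + z)
  rcases lt_trichotomy z.im 0 with him | him | him
  · have : 0 ≤ (1 - z).arg := arg_nonneg_iff.2 (by simp; linarith)
    have : (1 + z).arg < 0 := arg_neg_iff.2 (by simpa)
    constructor <;> linarith
  · rcases le_or_gt 0 (1 + z.re) with hre | hre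
    · have : (1 + z).arg = 0 := arg_eq_zero_iff.2 ⟨by simpa, by simp [him]⟩
      constructor <;> linarith
    · have : (1 - z).arg = 0 := arg_eq_zero_iff.2 ⟨by simp; linarith, by simp [him]⟩
      constructor <;> linarith
  · have : (1 - z).arg < 0 := arg_neg_iff.2 (by simpa)
    have : 0 ≤ (1 + z).arg := arg_nonneg_iff.2 (by simp; linarith)
    constructor <;> linarith

lemma csqrt_one_sub_sq (z : ℂ) : csqrt (1 - z ^ 2) = csqrt (1 - z) * csqrt (1 + z) := by
  by_cases h1 : z = 1
  · simp [h1, csqrt]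
  by_cases h2 : z = -1
  · norm_num [h2, csqrt]
  rw [show 1 - z ^ 2 = (1 - z) * (1 + z) by ring]
  exact csqrt_mul (sub_ne_zero.2 (Ne.symm h1)) (fun h => h2 (by linear_combination h))
    (arg_one_sub_add_arg_one_add_mem z)

lemma continuousAt_csqrt {a : ℂ} (ha : 0 ≤ a.re ∨ a.im ≠ 0) : ContinuousAt csqrt a :=
  continuousAt_cpow_const_of_re_pos ha (by norm_num)

lemma csqrt_one : csqrt 1 = 1 := by simp [csqrt]

lemma csqrt_two : csqrt 2 = (√2 : ℝ) := by
  rw [csqrt, show (1 : ℂ) / 2 = ((1 / 2 : ℝ) : ℂ) by norm_num,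
    show (2 : ℂ) = ((2 : ℝ) : ℂ) by norm_num, ← ofReal_cpow (by norm_num), Real.sqrt_eq_rpow]

lemma ofReal_sqrt_two_mul_self : ((√2 : ℝ) : ℂ) * (√2 : ℝ) = 2 := by
  rw [← ofReal_mul, Real.mul_self_sqrt (by norm_num)]
  norm_num

lemma re_mul_one_add_pos {w δ : ℂ} {c : ℝ} (hc : 0 < c) (hw : w ≠ 0) (hre : 0 ≤ w.re)
    (hδ : ‖δ‖ ≤ c / 2) (hwc : 3 * c * ‖w‖ ≤ 1) : 0 < (w * (1 + (δ - c) * w)).re := by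
  have hnorm : ‖w‖ ^ 2 = w.re ^ 2 + w.im ^ 2 := by rw [Complex.sq_norm, normSq_apply]; ring
  have hpos : 0 < w.re ^ 2 + w.im ^ 2 := by rw [← hnorm]; positivity
  have hδw : -(c / 2 * ‖w‖ ^ 2) ≤ (δ * w ^ 2).re := by
    have : ‖δ * w ^ 2‖ ≤ c / 2 * ‖w‖ ^ 2 := by
      rw [norm_mul, norm_pow]; gcongr
    linarith [neg_abs_le (δ * w ^ 2).re, abs_re_le_norm (δ * w ^ 2)]
  have hsmall : 3 * c * w.re ^ 2 ≤ w.re := by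
    nlinarith [mul_le_mul_of_nonneg_left (re_le_norm w) hre]
  have hexp : (w * (1 + (δ - c) * w)).re =
      w.re - c * (w.re ^ 2 - w.im ^ 2) + (δ * w ^ 2).re := by
    rw [show w * (1 + (δ - c) * w) = w + δ * w ^ 2 - c * w ^ 2 by ring, sub_re, add_re,
      re_ofReal_mul, show (w ^ 2).re = w.re ^ 2 - w.im ^ 2 by simp [sq]]
    ring
  rw [hexp]
  rcases hre.lt_or_eq with hre' | hre'
  · nlinarith [sq_nonneg w.im]
  · have : 0 < w.im ^ 2 := by rw [← hre'] at hpos; simpa using hpos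
    nlinarith

section Limits

variable {α : Type*} {l : Filter α}

lemma tendsto_of_tendsto_sub_div {f g : α → ℂ} {c a : ℂ} (hg : Tendsto g l (𝓝 0))
    (hg0 : ∀ᶠ x in l, g x ≠ 0) (h : Tendsto (fun x => (f x - c) / g x) l (𝓝 a)) :
    Tendsto f l (𝓝 c) := by
  have hlim := tendsto_const_nhds (x := c) |>.add (h.mul hg)
  rw [mul_zero, add_zero] at hlim
  refine hlim.congr' ?_
  filter_upwards [hg0] with x hx
  field_simp
  ring

lemma tendsto_csqrt_zero {f : α → ℂ} (hf : Tendsto f l (𝓝 0)) :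
    Tendsto (fun x => csqrt (f x)) l (𝓝 0) := by
  have := (continuousAt_csqrt (a := 0) (by simp)).tendsto.comp hf
  rwa [show csqrt 0 = 0 by simp [csqrt]] at this

/-- The principal square root is not multiplicative; here `√(a/b) ≈ 1 - (c/2)√b` with `c > 0`
keeps `√b · √(a/b)` in the open right half-plane. -/
lemma eventually_csqrt_eq_mul_csqrt_div {a b : α → ℂ} {c : ℝ} (hc : 0 < c)
    (hb : Tendsto b l (𝓝 0)) (hb0 : ∀ᶠ x in l, b x ≠ 0)
    (h : Tendsto (fun x => (a x / b x - 1) / csqrt (b x)) l (𝓝 (-c))) :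
    ∀ᶠ x in l, csqrt (a x) = csqrt (b x) * csqrt (a x / b x) := by
  have hw : Tendsto (fun x => csqrt (b x)) l (𝓝 0) := tendsto_csqrt_zero hb
  have hw0 : ∀ᶠ x in l, csqrt (b x) ≠ 0 := hb0.mono fun x => csqrt_ne_zero
  have hq : Tendsto (fun x => csqrt (a x / b x)) l (𝓝 1) := by
    have := (continuousAt_csqrt (by simp)).tendsto.comp (tendsto_of_tendsto_sub_div hw hw0 h)
    rwa [csqrt_one] at this
  have hq1 : ∀ᶠ x in l, csqrt (a x / b x) + 1 ≠ 0 :=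
    (hq.add_const 1).eventually_ne (by norm_num)
  have hδ : Tendsto (fun x => (csqrt (a x / b x) - 1) / csqrt (b x) + (c / 2 : ℝ)) l (𝓝 0) := by
    have := (h.mul ((hq.add_const 1).inv₀ (by norm_num))).add_const ((c / 2 : ℝ) : ℂ)
    rw [show -(c : ℂ) * (1 + 1)⁻¹ + (c / 2 : ℝ) = 0 by push_cast; ring] at this
    refine this.congr' ?_
    filter_upwards [hq1, hw0] with x hx hx'
    rw [show a x / b x - 1 = (csqrt (a x / b x) - 1) * (csqrt (a x / b x) + 1) by
      linear_combination -csqrt_mul_self (a x / b x)]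
    field_simp
  filter_upwards [hw0, hb0,
    (tendsto_zero_iff_norm_tendsto_zero.1 hδ).eventually_lt_const (by positivity : 0 < c / 4),
    (tendsto_zero_iff_norm_tendsto_zero.1 hw).eventually_lt_const
      (by positivity : 0 < 1 / (3 * (c / 2)))] with x hw0x hb0x hδx hwx
  refine csqrt_eq_of_mul_self_eq ?_ ?_
  · rw [mul_mul_mul_comm, csqrt_mul_self, csqrt_mul_self]
    field_simp
  · set w := csqrt (b x)
    set δ := (csqrt (a x / b x) - 1) / w + (c / 2 : ℝ)
    have hqδ : csqrt (a x / b x) = 1 + (δ - (c / 2 : ℝ)) * w := by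
      simp only [δ]
      field_simp
      ring
    rw [lt_div_iff₀ (by positivity)] at hwx
    rw [hqδ]
    exact re_mul_one_add_pos (half_pos hc) hw0x (re_csqrt_nonneg _) (by linarith) (by linarith)

end Limits

lemma eventually_one_sub_ne_zero : ∀ᶠ z in 𝓝[≠] (1 : ℂ), 1 - z ≠ 0 :=
  eventually_mem_nhdsWithin.mono fun _ hz => sub_ne_zero.2 (Ne.symm hz)

lemma tendsto_nhdsNE_self : Tendsto (fun z : ℂ => z) (𝓝[≠] 1) (𝓝 1) :=
  tendsto_nhdsWithin_of_tendsto_nhds tendsto_id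

lemma tendsto_one_sub_nhdsNE : Tendsto (fun z : ℂ => 1 - z) (𝓝[≠] 1) (𝓝 0) := by
  have : Tendsto (fun z : ℂ => 1 - z) (𝓝 1) (𝓝 (1 - 1)) := tendsto_const_nhds.sub tendsto_id
  rw [sub_self] at this
  exact this.mono_left nhdsWithin_le_nhds

lemma tendsto_csqrt_one_sub : Tendsto (fun z => csqrt (1 - z)) (𝓝[≠] 1) (𝓝 0) :=
  tendsto_csqrt_zero tendsto_one_sub_nhdsNE

lemma eventually_csqrt_one_sub_ne_zero : ∀ᶠ z in 𝓝[≠] (1 : ℂ), csqrt (1 - z) ≠ 0 :=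
  eventually_one_sub_ne_zero.mono fun _ => csqrt_ne_zero

lemma tendsto_csqrt_one_add : Tendsto (fun z => csqrt (1 + z)) (𝓝[≠] 1) (𝓝 (√2 : ℝ)) := by
  have hc : ContinuousAt (fun z => csqrt (1 + z)) 1 :=
    (continuousAt_csqrt (by norm_num)).comp (continuous_const.add continuous_id).continuousAt
  rw [← csqrt_two, show (2 : ℂ) = 1 + 1 by norm_num]
  exact hc.tendsto.mono_left nhdsWithin_le_nhds

lemma tendsto_csqrt_one_add_sub_div :
    Tendsto (fun z => (csqrt (1 + z) - (√2 : ℝ)) / (1 - z)) (𝓝[≠] 1)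
      (𝓝 (-(√2 : ℝ) / 4)) := by
  have hsum := tendsto_csqrt_one_add.add_const ((√2 : ℝ) : ℂ)
  have hs : ((√2 : ℝ) : ℂ) + (√2 : ℝ) ≠ 0 := by
    rw [← ofReal_add, ofReal_ne_zero]; positivity
  have := (hsum.inv₀ hs).neg
  rw [show -(((√2 : ℝ) : ℂ) + (√2 : ℝ))⁻¹ = -(√2 : ℝ) / 4 by
    field_simp; linear_combination 2 * ofReal_sqrt_two_mul_self] at this
  refine this.congr' ?_
  filter_upwards [hsum.eventually_ne hs, eventually_one_sub_ne_zero] with z hz hz'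
  rw [eq_div_iff hz', neg_mul, ← div_eq_inv_mul, neg_eq_iff_eq_neg, div_eq_iff hz]
  linear_combination csqrt_mul_self (1 + z) - ofReal_sqrt_two_mul_self

lemma arccosC_eq_neg_I_mul_log (z : ℂ) :
    arccosC z = -I * log (1 + csqrt (1 - z) * (I * csqrt (1 + z) - csqrt (1 - z))) := by
  rw [arccosC, csqrt_one_sub_sq]
  congr 2
  linear_combination csqrt_mul_self (1 - z)

lemma logTaylor_four (x : ℂ) : logTaylor 4 x = x - x ^ 2 / 2 + x ^ 3 / 3 := by
  simp [logTaylor_succ, logTaylor_zero]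
  ring

lemma neg_I_mul_log_sub_eq {w u : ℂ} (h : u ^ 2 = 2 - w ^ 2) (s : ℂ) :
    -I * log (1 + w * (I * u - w)) - s * w =
      -I * (log (1 + w * (I * u - w)) - logTaylor 4 (w * (I * u - w))) + (u - s) * w
        + w ^ 3 * (I * w + u - I * (I * u - w) ^ 3 / 3) := by
  rw [logTaylor_four]
  linear_combination (-(u * w + u * w ^ 3 - I / 2 * w ^ 2 * u ^ 2)) * I_sq - (I / 2 * w ^ 2) * h

lemma tendsto_arccosC_sub_div_cube :
    Tendsto (fun z => (arccosC z - (√2 : ℝ) * csqrt (1 - z)) / csqrt (1 - z) ^ 3) (𝓝[≠] 1)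
      (𝓝 ((√2 : ℝ) / 12)) := by
  have hv : Tendsto (fun z => I * csqrt (1 + z) - csqrt (1 - z)) (𝓝[≠] 1)
      (𝓝 (I * (√2 : ℝ))) := by
    simpa using (tendsto_csqrt_one_add.const_mul I).sub tendsto_csqrt_one_sub
  have hx : Tendsto (fun z => csqrt (1 - z) * (I * csqrt (1 + z) - csqrt (1 - z))) (𝓝[≠] 1)
      (𝓝 0) := by
    simpa using tendsto_csqrt_one_sub.mul hv
  have hlog := (((log_sub_logTaylor_isBigO 3).trans_isLittleO
    (isLittleO_pow_pow (by norm_num : 3 < 3 + 1))).comp_tendsto hx).tendsto_div_nhds_zero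
  have hlim := (((hlog.const_mul (-I)).mul (hv.pow 3)).add tendsto_csqrt_one_add_sub_div).add
    (((tendsto_csqrt_one_sub.const_mul I).add tendsto_csqrt_one_add).sub
      ((hv.pow 3).const_mul I |>.div_const 3))
  rw [show -I * 0 * (I * (√2 : ℝ)) ^ 3 + -(√2 : ℝ) / 4
      + (I * 0 + (√2 : ℝ) - I * (I * (√2 : ℝ)) ^ 3 / 3) = ((√2 : ℝ) : ℂ) / 12 by
    linear_combination (-(I ^ 2 - 1) * ((√2 : ℝ) : ℂ) ^ 3 / 3) * I_sq
      - ((√2 : ℝ) : ℂ) / 3 * ofReal_sqrt_two_mul_self] at hlim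
  refine hlim.congr' ?_
  filter_upwards [eventually_csqrt_one_sub_ne_zero,
    hv.eventually_ne (by simp : I * ((√2 : ℝ) : ℂ) ≠ 0)] with z hw hvz
  have hu : csqrt (1 + z) ^ 2 = 2 - csqrt (1 - z) ^ 2 := by
    linear_combination csqrt_mul_self (1 + z) + csqrt_mul_self (1 - z)
  rw [arccosC_eq_neg_I_mul_log, neg_I_mul_log_sub_eq hu]
  simp only [Function.comp_apply]
  set w := csqrt (1 - z)
  rw [show 1 - z = w * w from (csqrt_mul_self _).symm]
  field_simp

lemma tendsto_arccosC_div : Tendsto (fun z => arccosC z / csqrt (1 - z)) (𝓝[≠] 1)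
    (𝓝 (√2 : ℝ)) := by
  have h := (tendsto_arccosC_sub_div_cube.mul (tendsto_csqrt_one_sub.pow 2)).const_add
    ((√2 : ℝ) : ℂ)
  rw [zero_pow two_ne_zero, mul_zero, add_zero] at h
  refine h.congr' ?_
  filter_upwards [eventually_csqrt_one_sub_ne_zero] with z hw
  field_simp
  ring

lemma K0C_eq (z : ℂ) : K0C z = 1 - arccosC z / π := by
  rw [K0C, arccosC, csqrt]
  field_simp
  ring

lemma K1C_eq (z : ℂ) : K1C z = z - (z * arccosC z - csqrt (1 - z ^ 2)) / π := by
  rw [K1C, arccosC, csqrt]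
  field_simp
  ring

lemma tendsto_K1C_sub_div : Tendsto (fun z => (K1C z - z) / csqrt (1 - z)) (𝓝[≠] 1) (𝓝 0) := by
  have h := ((tendsto_nhdsNE_self.mul tendsto_arccosC_div).sub
    tendsto_csqrt_one_add).neg.div_const (π : ℂ)
  rw [one_mul, sub_self, neg_zero, zero_div] at h
  refine h.congr' ?_
  filter_upwards [eventually_csqrt_one_sub_ne_zero] with z hw
  rw [K1C_eq, csqrt_one_sub_sq]
  field_simp
  ring

lemma tendsto_one_sub_K1C_div_sub_one_div :
    Tendsto (fun z => ((1 - K1C z) / (1 - z) - 1) / csqrt (1 - z)) (𝓝[≠] 1)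
      (𝓝 (-((2 * √2 / (3 * π) : ℝ) : ℂ))) := by
  have h := ((tendsto_nhdsNE_self.mul tendsto_arccosC_sub_div_cube).add
    (tendsto_csqrt_one_add_sub_div.const_sub (-((√2 : ℝ) : ℂ)))).div_const (π : ℂ)
  rw [show (1 * ((√2 : ℝ) / 12) + (-((√2 : ℝ) : ℂ) - -(√2 : ℝ) / 4)) / (π : ℂ)
      = -((2 * √2 / (3 * π) : ℝ) : ℂ) by push_cast; field_simp; ring] at h
  refine h.congr' ?_
  filter_upwards [eventually_csqrt_one_sub_ne_zero] with z hw
  rw [K1C_eq, csqrt_one_sub_sq]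
  set w := csqrt (1 - z)
  have hw2 : 1 - z = w * w := (csqrt_mul_self _).symm
  rw [hw2]
  field_simp
  linear_combination ((√2 : ℝ) * w - π) * hw2

lemma tendsto_one_sub_K1C_div : Tendsto (fun z => (1 - K1C z) / (1 - z)) (𝓝[≠] 1) (𝓝 1) :=
  tendsto_of_tendsto_sub_div tendsto_csqrt_one_sub eventually_csqrt_one_sub_ne_zero
    tendsto_one_sub_K1C_div_sub_one_div

lemma tendsto_K1C_nhdsNE : Tendsto K1C (𝓝[≠] 1) (𝓝[≠] 1) := by
  have h := tendsto_one_sub_K1C_div.mul tendsto_one_sub_nhdsNE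
  rw [mul_zero] at h
  refine tendsto_nhdsWithin_iff.2 ⟨?_, ?_⟩
  · have := h.const_sub 1
    rw [sub_zero] at this
    refine this.congr' ?_
    filter_upwards [eventually_one_sub_ne_zero] with z hz
    field_simp
    ring
  · filter_upwards [tendsto_one_sub_K1C_div.eventually_ne one_ne_zero] with z hz h1
    rw [mem_singleton_iff.1 h1, sub_self, zero_div] at hz
    exact hz rfl

lemma tendsto_csqrt_one_sub_K1C_div :
    Tendsto (fun z => csqrt (1 - K1C z) / csqrt (1 - z)) (𝓝[≠] 1) (𝓝 1) := by
  have hc : (0 : ℝ) < 2 * √2 / (3 * π) := by positivity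
  have h := (continuousAt_csqrt (by norm_num)).tendsto.comp tendsto_one_sub_K1C_div
  rw [csqrt_one] at h
  refine h.congr' ?_
  filter_upwards [eventually_csqrt_eq_mul_csqrt_div hc tendsto_one_sub_nhdsNE
    eventually_one_sub_ne_zero tendsto_one_sub_K1C_div_sub_one_div,
    eventually_csqrt_one_sub_ne_zero] with z hz hw
  rw [Function.comp_apply, hz]
  field_simp

lemma tendsto_comp_div_csqrt_one_sub {f g : ℂ → ℂ} {a : ℂ} (hg : Tendsto g (𝓝[≠] 1) (𝓝[≠] 1))
    (hgw : Tendsto (fun z => csqrt (1 - g z) / csqrt (1 - z)) (𝓝[≠] 1) (𝓝 1))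
    (hf : Tendsto (fun z => f z / csqrt (1 - z)) (𝓝[≠] 1) (𝓝 a)) :
    Tendsto (fun z => f (g z) / csqrt (1 - z)) (𝓝[≠] 1) (𝓝 a) := by
  have h := (hf.comp hg).mul hgw
  rw [mul_one] at h
  refine h.congr' ?_
  filter_upwards [hg.eventually eventually_csqrt_one_sub_ne_zero] with z hz
  simp only [Function.comp_apply]
  field_simp

lemma tendsto_csqrt_one_sub_K1C_iterate_div (j : ℕ) :
    Tendsto (fun z => csqrt (1 - K1C^[j] z) / csqrt (1 - z)) (𝓝[≠] 1) (𝓝 1) := by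
  induction j with
  | zero =>
    refine tendsto_const_nhds.congr' ?_
    filter_upwards [eventually_csqrt_one_sub_ne_zero] with z hw
    simp [hw]
  | succ j ih =>
    simp only [Function.iterate_succ_apply']
    exact tendsto_comp_div_csqrt_one_sub (f := fun z => csqrt (1 - K1C z))
      (tendsto_K1C_nhdsNE.iterate j) ih tendsto_csqrt_one_sub_K1C_div

lemma tendsto_K1C_iterate_sub_div (j : ℕ) :
    Tendsto (fun z => (K1C^[j] z - z) / csqrt (1 - z)) (𝓝[≠] 1) (𝓝 0) := by
  induction j with
  | zero =>
    simp only [Function.iterate_zero_apply, sub_self, zero_div]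
    exact tendsto_const_nhds
  | succ j ih =>
    have h := (tendsto_comp_div_csqrt_one_sub (tendsto_K1C_nhdsNE.iterate j)
      (tendsto_csqrt_one_sub_K1C_iterate_div j) tendsto_K1C_sub_div).add ih
    rw [add_zero] at h
    refine h.congr fun z => ?_
    rw [Function.iterate_succ_apply', ← add_div, sub_add_sub_cancel]

lemma tendsto_K0C_K1C_iterate_sub_one_div (j : ℕ) :
    Tendsto (fun z => (K0C (K1C^[j] z) - 1) / csqrt (1 - z)) (𝓝[≠] 1)
      (𝓝 (-((√2 : ℝ) : ℂ) / π)) := by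
  refine tendsto_comp_div_csqrt_one_sub (f := fun z => K0C z - 1)
    (tendsto_K1C_nhdsNE.iterate j) (tendsto_csqrt_one_sub_K1C_iterate_div j) ?_
  refine (tendsto_arccosC_div.neg.div_const (π : ℂ)).congr fun z => ?_
  rw [K0C_eq]
  ring

lemma NkC_succ_sub (β : ℝ) (k : ℕ) (z : ℂ) :
    NkC β (k + 1) z - ((k + 1 : ℕ) + 1) * (z + (β : ℂ) ^ 2) =
      (K1C^[k + 1] z - z) + NkC β k z * (K0C (K1C^[k] z) - 1)
        + (NkC β k z - ((k : ℂ) + 1) * (z + (β : ℂ) ^ 2)) := by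
  rw [NkC]
  push_cast
  ring

lemma tendsto_NkC_sub_div (β : ℝ) (k : ℕ) :
    Tendsto (fun z => (NkC β k z - ((k : ℂ) + 1) * (z + (β : ℂ) ^ 2)) / csqrt (1 - z))
      (𝓝[≠] 1) (𝓝 ((-(√2 * (1 + β ^ 2) * k * (k + 1) / (2 * π)) : ℝ) : ℂ)) := by
  induction k with
  | zero => simp [NkC]
  | succ k ih =>
    have hN : Tendsto (NkC β k) (𝓝[≠] 1) (𝓝 (((k : ℂ) + 1) * (1 + (β : ℂ) ^ 2))) := by
      have h := (ih.mul tendsto_csqrt_one_sub).add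
        ((tendsto_nhdsNE_self.add_const ((β : ℂ) ^ 2)).const_mul ((k : ℂ) + 1))
      rw [mul_zero, zero_add] at h
      refine h.congr' ?_
      filter_upwards [eventually_csqrt_one_sub_ne_zero] with z hw
      field_simp
      ring
    have h := ((tendsto_K1C_iterate_sub_div (k + 1)).add
      (hN.mul (tendsto_K0C_K1C_iterate_sub_one_div k))).add ih
    rw [show (0 : ℂ) + ((k : ℂ) + 1) * (1 + (β : ℂ) ^ 2) * (-((√2 : ℝ) : ℂ) / π)
        + ((-(√2 * (1 + β ^ 2) * k * (k + 1) / (2 * π)) : ℝ) : ℂ)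
        = ((-(√2 * (1 + β ^ 2) * (k + 1 : ℕ) * ((k + 1 : ℕ) + 1) / (2 * π)) : ℝ) : ℂ) by
      push_cast; field_simp; ring] at h
    refine h.congr fun z => ?_
    rw [NkC_succ_sub]
    ring

theorem ntk_expansion_at_one_general (β : ℝ) (k : ℕ) :
    Tendsto (fun z : ℂ =>
        (NkC β k z - ((k : ℂ) + 1) * (z + (β : ℂ) ^ 2)) / ((1 - z) ^ ((1 : ℂ) / 2)))
      (nhdsWithin 1 Dslit)
      (nhds ((-(Real.sqrt 2 * (1 + β ^ 2) * k * (k + 1) / (2 * Real.pi)) : ℝ) : ℂ)) := by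
  have hD : Dslit ⊆ {(1 : ℂ)}ᶜ := fun z hz h1 =>
    hz ⟨by rw [mem_singleton_iff.1 h1, one_im], Or.inl (by rw [mem_singleton_iff.1 h1, one_re])⟩
  exact (tendsto_NkC_sub_div β k).mono_left (nhdsWithin_mono 1 hD)

theorem ntk_expansion_at_one (β : ℝ) (k : ℕ) (hk : 1 ≤ k) :
    Tendsto (fun z : ℂ =>
        (NkC β k z - ((k : ℂ) + 1) * (z + (β : ℂ) ^ 2)) / ((1 - z) ^ ((1 : ℂ) / 2)))
      (nhdsWithin 1 Dslit)
      (nhds ((-(Real.sqrt 2 * (1 + β ^ 2) * k * (k + 1) / (2 * Real.pi)) : ℝ) : ℂ)) :=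
  ntk_expansion_at_one_general β k
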